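/- For any positive integers r, t, the edge metric dimension of the torus C_{4r} □ C_{4t} is at least 3; that is, no set of two vertices is an edge metric generator. -/

import Mathlib

/-!
Let `p` be the vertex antipodal to `a` in `C_{4r} □ C_{4t}`. Distances in a box product add up
and the distance in `C_n` is the cyclic norm `min k (n - k)` of the difference, so every neighbour
of `p` is strictly closer to `a` than `p` is. Hence `a` sees all four edges at `p` at the same
distance `d(a, p) - 1`, while any vertex `b` sees each of them at distance `d(b, p)` or
`d(b, p) - 1`: by pigeonhole two of these edges are not distinguished by `{a, b}`.
-/

open SimpleGraph

/-- Distance from a vertex `v` to an edge `e = uw`: `min (d v u) (d v w)`. -/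
noncomputable def edgeDist {V : Type*} (G : SimpleGraph V) (v : V) (e : Sym2 V) : ℕ :=
  Sym2.lift ⟨fun u w => min (G.dist v u) (G.dist v w), fun u w => by simp [min_comm]⟩ e

/-- `S` is an edge metric generator: every two distinct edges are distinguished
by some vertex of `S`. -/
def IsEdgeMetricGenerator {V : Type*} (G : SimpleGraph V) (S : Set V) : Prop :=
  ∀ e₁ ∈ G.edgeSet, ∀ e₂ ∈ G.edgeSet, e₁ ≠ e₂ →
    ∃ v ∈ S, edgeDist G v e₁ ≠ edgeDist G v e₂

/-- The edge metric dimension: minimum cardinality of an edge metric generator. -/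
noncomputable def edim {V : Type*} (G : SimpleGraph V) : ℕ :=
  sInf {k | ∃ S : Finset V, S.card = k ∧ IsEdgeMetricGenerator G ↑S}

namespace Fin

variable {n : ℕ}

def cyclicNorm (k : Fin n) : ℕ := min k.val (n - k.val)

theorem cyclicNorm_le_val (k : Fin n) : k.cyclicNorm ≤ k.val := min_le_left _ _

theorem cyclicNorm_zero [NeZero n] : (0 : Fin n).cyclicNorm = 0 := by
  simp [cyclicNorm]

theorem cyclicNorm_neg [NeZero n] (k : Fin n) : (-k).cyclicNorm = k.cyclicNorm := by
  unfold cyclicNorm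
  rw [Fin.val_neg]
  split_ifs with hk
  · simp [hk]
  · have := k.isLt
    omega

theorem cyclicNorm_add_le (k l : Fin n) : (k + l).cyclicNorm ≤ k.cyclicNorm + l.cyclicNorm := by
  unfold cyclicNorm
  have := k.isLt
  have := l.isLt
  rw [Fin.val_add_eq_ite]
  split_ifs <;> omega

theorem cyclicNorm_add_antipode {m : ℕ} (hn : n = 2 * m) {h : Fin n} (hh : h.val = m)
    (k : Fin n) : (k + h).cyclicNorm + k.cyclicNorm = m := by
  unfold cyclicNorm
  have := k.isLt
  rw [Fin.val_add_eq_ite]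
  split_ifs <;> omega

end Fin

namespace SimpleGraph

variable {V : Type*} {G : SimpleGraph V}

theorem Walk.apply_le_add_length {f : V → ℕ} (hf : ∀ x y, G.Adj x y → f y ≤ f x + 1)
    {u v : V} (p : G.Walk u v) : f v ≤ f u + p.length := by
  induction p with
  | nil => simp
  | cons hadj _ ih =>
    have := hf _ _ hadj
    rw [Walk.length_cons]
    omega

theorem Reachable.apply_le_add_dist {f : V → ℕ} (hf : ∀ x y, G.Adj x y → f y ≤ f x + 1)
    {u v : V} (huv : G.Reachable u v) : f v ≤ f u + G.dist u v := by
  obtain ⟨p, hp⟩ := huv.exists_walk_length_eq_dist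
  exact hp ▸ p.apply_le_add_length hf

def IsLocallyFarthest (G : SimpleGraph V) (u p : V) : Prop :=
  ∀ x, G.Adj p x → G.dist u x < G.dist u p

theorem dist_boxProd {W : Type*} {H : SimpleGraph W} {x y : V × W}
    (h₁ : G.Reachable x.1 y.1) (h₂ : H.Reachable x.2 y.2) :
    (G □ H).dist x y = G.dist x.1 y.1 + H.dist x.2 y.2 := by
  rw [dist, edist_boxProd, ENat.toNat_add (edist_ne_top_iff_reachable.mpr h₁)
    (edist_ne_top_iff_reachable.mpr h₂), dist, dist]

theorem IsLocallyFarthest.boxProd {W : Type*} {H : SimpleGraph W} (hG : G.Preconnected)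
    (hH : H.Preconnected) {u p : V × W} (h₁ : G.IsLocallyFarthest u.1 p.1)
    (h₂ : H.IsLocallyFarthest u.2 p.2) : (G □ H).IsLocallyFarthest u p := by
  intro x hx
  rw [dist_boxProd (hG _ _) (hH _ _), dist_boxProd (hG _ _) (hH _ _)]
  rcases hx with ⟨hadj, heq⟩ | ⟨hadj, heq⟩
  · have := h₁ _ hadj
    rw [heq]
    omega
  · have := h₂ _ hadj
    rw [heq]
    omega

section cycleGraph

variable {n : ℕ} [NeZero n]

theorem cycleGraph_dist_add_one_le (x : Fin n) : (cycleGraph n).dist x (x + 1) ≤ 1 := by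
  rcases Nat.lt_or_ge 1 n with hn | hn
  · refine (dist_eq_one_iff_adj.mpr (cycleGraph_adj'.mpr (Or.inr ?_))).le
    rw [add_sub_cancel_left, Fin.val_one', Nat.mod_eq_of_lt hn]
  · have : Subsingleton (Fin n) := Fin.subsingleton_iff_le_one.mpr hn
    simp [Subsingleton.elim (x + 1) x]

open Fin.NatCast in
theorem cycleGraph_dist_add_natCast_le (u : Fin n) (k : ℕ) :
    (cycleGraph n).dist u (u + (k : Fin n)) ≤ k := by
  induction k with
  | zero => simp
  | succ k ih =>
    have := (cycleGraph_preconnected (u + (k : Fin n)) (u + k + 1)).dist_triangle_right u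
    rw [Nat.cast_succ, ← add_assoc]
    have := cycleGraph_dist_add_one_le (u + (k : Fin n))
    omega

open Fin.NatCast in
theorem cycleGraph_dist_le_val (u v : Fin n) : (cycleGraph n).dist u v ≤ (v - u).val := by
  simpa using cycleGraph_dist_add_natCast_le u (v - u).val

theorem cycleGraph_dist (u v : Fin n) : (cycleGraph n).dist u v = (v - u).cyclicNorm := by
  refine le_antisymm (le_min (cycleGraph_dist_le_val u v) ?_) ?_
  · calc (cycleGraph n).dist u v = (cycleGraph n).dist v u := dist_comm
      _ ≤ (u - v).val := cycleGraph_dist_le_val v u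
      _ = (n - (v - u).val) % n := by rw [← neg_sub, Fin.val_neg']
      _ ≤ n - (v - u).val := Nat.mod_le _ _
  · have hf : ∀ x y, (cycleGraph n).Adj x y →
        (y - u).cyclicNorm ≤ (x - u).cyclicNorm + 1 := by
      intro x y hxy
      have hstep : (y - x).cyclicNorm ≤ 1 := by
        rcases cycleGraph_adj'.mp hxy with h | h
        · rw [← neg_sub, Fin.cyclicNorm_neg]
          exact h ▸ (x - y).cyclicNorm_le_val
        · exact h ▸ (y - x).cyclicNorm_le_val
      have := (y - x).cyclicNorm_add_le (x - u)
      rw [sub_add_sub_cancel] at this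
      omega
    simpa [Fin.cyclicNorm_zero] using (cycleGraph_preconnected u v).apply_le_add_dist hf

theorem cycleGraph_isLocallyFarthest_add_antipode {m : ℕ} (hn : n = 2 * m) {h : Fin n}
    (hh : h.val = m) (u : Fin n) : (cycleGraph n).IsLocallyFarthest u (u + h) := by
  intro x hx
  have hx1 : (x - (u + h)).cyclicNorm = 1 := by
    rw [← cycleGraph_dist, dist_eq_one_iff_adj]
    exact hx
  have hfar := Fin.cyclicNorm_add_antipode hn hh (x - (u + h))
  have hant := Fin.cyclicNorm_add_antipode hn hh 0
  rw [show x - (u + h) + h = x - u by abel] at hfar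
  rw [zero_add, Fin.cyclicNorm_zero] at hant
  rw [cycleGraph_dist, cycleGraph_dist, add_sub_cancel_left]
  omega

end cycleGraph

theorem cycleGraph_degree {n : ℕ} (hn : 3 ≤ n) (v : Fin n) : (cycleGraph n).degree v = 2 := by
  obtain ⟨k, rfl⟩ : ∃ k, n = k + 3 := ⟨n - 3, by omega⟩
  exact cycleGraph_degree_three_le

end SimpleGraph

section EdgeMetric

variable {V : Type*} {G : SimpleGraph V}

theorem edgeDist_mk (v x y : V) : edgeDist G v s(x, y) = min (G.dist v x) (G.dist v y) := rfl

theorem edgeDist_eq_zero_iff (hG : G.Connected) {v : V} {e : Sym2 V} :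
    edgeDist G v e = 0 ↔ v ∈ e := by
  induction e using Sym2.ind with
  | _ x y => simp [edgeDist_mk, hG.dist_eq_zero_iff]

theorem edgeDist_of_adj {p x : V} (hpx : G.Adj p x) (v : V) :
    edgeDist G v s(p, x) = G.dist v p ∨ edgeDist G v s(p, x) = G.dist v p - 1 := by
  rw [edgeDist_mk]
  rcases hpx.diff_dist_adj (u := v) with h | h | h <;> omega

theorem SimpleGraph.IsLocallyFarthest.edgeDist_eq {a p x : V} (hp : G.IsLocallyFarthest a p)
    (hpx : G.Adj p x) : edgeDist G a s(p, x) = G.dist a p - 1 := by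
  have := hp x hpx
  rw [edgeDist_mk]
  rcases hpx.diff_dist_adj (u := a) with h | h | h <;> omega

theorem IsEdgeMetricGenerator.mono {S T : Set V} (hST : S ⊆ T) (hS : IsEdgeMetricGenerator G S) :
    IsEdgeMetricGenerator G T := by
  intro e₁ h₁ e₂ h₂ hne
  obtain ⟨v, hv, hd⟩ := hS e₁ h₁ e₂ h₂ hne
  exact ⟨v, hST hv, hd⟩

theorem isEdgeMetricGenerator_univ (hG : G.Connected) : IsEdgeMetricGenerator G Set.univ := by
  intro e₁ _ e₂ _ hne
  by_contra! h
  exact hne (Sym2.ext fun v => by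
    rw [← edgeDist_eq_zero_iff hG, ← edgeDist_eq_zero_iff hG, h v trivial])

theorem not_isEdgeMetricGenerator_pair {a p : V} [Fintype (G.neighborSet p)]
    (hdeg : 3 ≤ G.degree p) (hp : G.IsLocallyFarthest a p) (b : V) :
    ¬ IsEdgeMetricGenerator G {a, b} := by
  obtain ⟨x, hx, y, hy, hxy, hb⟩ := Finset.exists_ne_map_eq_of_card_lt_of_maps_to
    (s := G.neighborFinset p) (t := {G.dist b p, G.dist b p - 1})
    (f := fun x => edgeDist G b s(p, x)) (Finset.card_le_two.trans_lt hdeg)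
    (fun x hx => by simpa using edgeDist_of_adj ((G.mem_neighborFinset p x).mp hx) b)
  rw [mem_neighborFinset] at hx hy
  intro hgen
  obtain ⟨v, hv, hne⟩ := hgen s(p, x) hx s(p, y) hy (fun h => hxy (Sym2.congr_right.mp h))
  rcases hv with rfl | rfl
  · exact hne (by rw [hp.edgeDist_eq hx, hp.edgeDist_eq hy])
  · exact hne hb

end EdgeMetric

theorem not_isEdgeMetricGenerator_pair_cycleGraph_boxProd {n m k l : ℕ} (hn : n = 2 * k)
    (hm : m = 2 * l) (hk : 2 ≤ k) (hl : 2 ≤ l) (a b : Fin n × Fin m) :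
    ¬ IsEdgeMetricGenerator (cycleGraph n □ cycleGraph m) {a, b} := by
  have : NeZero n := ⟨by omega⟩
  have : NeZero m := ⟨by omega⟩
  let antipode : Fin n × Fin m := (a.1 + ⟨k, by omega⟩, a.2 + ⟨l, by omega⟩)
  have hfar : (cycleGraph n □ cycleGraph m).IsLocallyFarthest a antipode :=
    .boxProd cycleGraph_preconnected cycleGraph_preconnected
      (cycleGraph_isLocallyFarthest_add_antipode hn rfl a.1)
      (cycleGraph_isLocallyFarthest_add_antipode hm rfl a.2)
  have hdeg : 3 ≤ (cycleGraph n □ cycleGraph m).degree antipode := by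
    rw [degree_boxProd, cycleGraph_degree (by omega), cycleGraph_degree (by omega)]
    omega
  exact not_isEdgeMetricGenerator_pair hdeg hfar b

theorem edim_torus_lower (r t : ℕ) (hr : 1 ≤ r) (ht : 1 ≤ t) :
    (∀ S : Finset (Fin (4 * r) × Fin (4 * t)), S.card = 2 →
      ¬ IsEdgeMetricGenerator (cycleGraph (4 * r) □ cycleGraph (4 * t)) ↑S) ∧
    3 ≤ edim (cycleGraph (4 * r) □ cycleGraph (4 * t)) := by
  have hpair : ∀ S : Finset (Fin (4 * r) × Fin (4 * t)), S.card = 2 →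
      ¬ IsEdgeMetricGenerator (cycleGraph (4 * r) □ cycleGraph (4 * t)) ↑S := by
    intro S hS
    obtain ⟨a, b, -, rfl⟩ := Finset.card_eq_two.mp hS
    rw [Finset.coe_pair]
    exact not_isEdgeMetricGenerator_pair_cycleGraph_boxProd (k := 2 * r) (l := 2 * t)
      (by omega) (by omega) (by omega) (by omega) a b
  have hconn : (cycleGraph (4 * r) □ cycleGraph (4 * t)).Connected :=
    have : NeZero (4 * r) := ⟨by omega⟩
    have : NeZero (4 * t) := ⟨by omega⟩
    connected_boxProd.mpr ⟨⟨cycleGraph_preconnected⟩, ⟨cycleGraph_preconnected⟩⟩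
  refine ⟨hpair, le_csInf ⟨_, Finset.univ, rfl, ?_⟩ ?_⟩
  · rw [Finset.coe_univ]
    exact isEdgeMetricGenerator_univ hconn
  · rintro k ⟨S, rfl, hS⟩
    by_contra! hk
    obtain ⟨T, hST, hT⟩ := Finset.exists_superset_card_eq (s := S) (n := 2) (by omega)
      (by simp only [Fintype.card_prod, Fintype.card_fin]; nlinarith)
    exact hpair T hT (hS.mono hST)
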